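/- Let φ : [0,T] → X be three times continuously differentiable into a Banach space X, let 0 < Δt ≤ T, t₀ = 0, t₁ = Δt, φ^{1/2} := (φ(t₁)+φ(t₀))/2 and ∂φ^{1/2} := (φ(t₁)-φ(t₀))/Δt. Then ‖(2/Δt)(∂φ^{1/2} - φ'(0)) - (φ''(t₁)+φ''(t₀))/2‖ ≤ Δt · sup_{t∈[0,t₁]} ‖φ'''(t)‖. -/

import Mathlib

/-! With `R := φ(Δt) - φ(0) - Δt φ'(0) - (Δt²/2) φ''(0)` the second-order Taylor remainder, the
quantity to estimate is `(2/Δt²) R - (φ''(Δt) - φ''(0))/2`. Integrating `‖φ'''‖ ≤ M` three times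
by the mean value inequality gives `‖R‖ ≤ M Δt³/6`, and once gives `‖φ''(Δt) - φ''(0)‖ ≤ M Δt`;
hence the bound `(1/3 + 1/2) M Δt ≤ M Δt`. -/

open Set

section

variable {E : Type*} [NormedAddCommGroup E] [NormedSpace ℝ E]

theorem norm_sub_le_of_norm_deriv_le_mul_pow {f f' : ℝ → E} {a b C : ℝ} (n : ℕ)
    (hf : ∀ x ∈ Icc a b, HasDerivAt f (f' x) x)
    (bound : ∀ x ∈ Icc a b, ‖f' x‖ ≤ C * (x - a) ^ n / n.factorial) :
    ∀ x ∈ Icc a b, ‖f x - f a‖ ≤ C * (x - a) ^ (n + 1) / (n + 1).factorial := by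
  have hB : ∀ x, HasDerivAt (fun x => C * (x - a) ^ (n + 1) / (n + 1).factorial)
      (C * (x - a) ^ n / n.factorial) x := by
    intro x
    refine ((((hasDerivAt_id' x).sub_const a).pow (n + 1)).const_mul C
      |>.div_const _).congr_deriv ?_
    rw [Nat.factorial_succ]
    push_cast
    field_simp
  exact image_norm_le_of_norm_deriv_right_le_deriv_boundary
    (fun x hx => ((hf x hx).continuousAt.sub continuousAt_const).continuousWithinAt)
    (fun x hx => ((hf x (Ico_subset_Icc_self hx)).sub_const (f a)).hasDerivWithinAt)
    (by simp) hB (fun x hx => bound x (Ico_subset_Icc_self hx))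

theorem norm_taylor_remainder_two_le {f f₁ f₂ f₃ : ℝ → E} {a b M : ℝ}
    (hf : ∀ x ∈ Icc a b, HasDerivAt f (f₁ x) x) (hf₁ : ∀ x ∈ Icc a b, HasDerivAt f₁ (f₂ x) x)
    (hf₂ : ∀ x ∈ Icc a b, HasDerivAt f₂ (f₃ x) x) (hM : ∀ x ∈ Icc a b, ‖f₃ x‖ ≤ M) :
    ∀ x ∈ Icc a b,
      ‖f x - f a - (x - a) • f₁ a - ((x - a) ^ 2 / 2) • f₂ a‖ ≤ M * (x - a) ^ 3 / 6 := by
  have h₂ := norm_sub_le_of_norm_deriv_le_mul_pow 0 hf₂ (by simpa using hM)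
  have h₁ := norm_sub_le_of_norm_deriv_le_mul_pow
    (f := fun x => f₁ x - f₁ a - (x - a) • f₂ a) 1
    (fun x hx => by
      have := ((hf₁ x hx).sub_const (f₁ a)).sub
        (((hasDerivAt_id' x).sub_const a).smul_const (f₂ a))
      rwa [one_smul] at this) h₂
  have h₀ := norm_sub_le_of_norm_deriv_le_mul_pow
    (f := fun x => f x - f a - (x - a) • f₁ a - ((x - a) ^ 2 / 2) • f₂ a) 2
    (fun x hx => by
      have hq : HasDerivAt (fun y => (y - a) ^ 2 / 2) (x - a) x := by
        refine (((hasDerivAt_id' x).sub_const a).pow 2 |>.div_const 2).congr_deriv ?_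
        ring
      have := (((hf x hx).sub_const (f a)).sub
        (((hasDerivAt_id' x).sub_const a).smul_const (f₁ a))).sub (hq.smul_const (f₂ a))
      rwa [one_smul] at this)
    (by simpa using h₁)
  simpa [Nat.factorial] using h₀

theorem norm_le_iSup_Icc {F : Type*} [SeminormedAddCommGroup F] {g : ℝ → F} {a b x : ℝ}
    (hg : ContinuousOn g (Icc a b)) (hx : x ∈ Icc a b) : ‖g x‖ ≤ ⨆ s : Icc a b, ‖g s‖ := by
  have hbdd := isCompact_Icc.bddAbove_image hg.norm
  rw [image_eq_range] at hbdd
  exact le_ciSup hbdd ⟨x, hx⟩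

theorem ContDiff.hasDerivAt_iteratedDeriv {f : ℝ → E} {n : WithTop ℕ∞} (hf : ContDiff ℝ n f)
    {k : ℕ} (hk : k < n) (x : ℝ) :
    HasDerivAt (iteratedDeriv k f) (iteratedDeriv (k + 1) f x) x := by
  rw [iteratedDeriv_succ]
  exact (hf.differentiable_iteratedDeriv k hk x).hasDerivAt

end

theorem stmt_10_general {X : Type*} [NormedAddCommGroup X] [NormedSpace ℝ X]
    (Δt : ℝ) (hΔt : 0 < Δt)
    (φ : ℝ → X) (hφ : ContDiff ℝ 3 φ) :
    ‖(2 / Δt) • (Δt⁻¹ • (φ Δt - φ 0) - deriv φ 0)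
        - (2 : ℝ)⁻¹ • (iteratedDeriv 2 φ Δt + iteratedDeriv 2 φ 0)‖
      ≤ Δt * ⨆ s : Set.Icc (0 : ℝ) Δt, ‖iteratedDeriv 3 φ (s : ℝ)‖ := by
  set M := ⨆ s : Set.Icc (0 : ℝ) Δt, ‖iteratedDeriv 3 φ (s : ℝ)‖
  have hΔt_mem : Δt ∈ Icc 0 Δt := right_mem_Icc.2 hΔt.le
  have hD (k : ℕ) (hk : k < 3) (x : ℝ) (_ : x ∈ Icc 0 Δt) :=
    hφ.hasDerivAt_iteratedDeriv (mod_cast hk) x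
  have hM (x : ℝ) (hx : x ∈ Icc 0 Δt) : ‖iteratedDeriv 3 φ x‖ ≤ M :=
    norm_le_iSup_Icc (hφ.continuous_iteratedDeriv 3 le_rfl).continuousOn hx
  have hM₀ : 0 ≤ M := (norm_nonneg _).trans (hM 0 (left_mem_Icc.2 hΔt.le))
  have hR := norm_taylor_remainder_two_le (hD 0 (by norm_num)) (hD 1 (by norm_num))
    (hD 2 (by norm_num)) hM Δt hΔt_mem
  have hV := norm_image_sub_le_of_norm_deriv_le_segment'
    (fun x hx => (hD 2 (by norm_num) x hx).hasDerivWithinAt)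
    (fun x hx => hM x (Ico_subset_Icc_self hx)) Δt hΔt_mem
  simp only [Nat.reduceAdd, iteratedDeriv_zero, iteratedDeriv_one, sub_zero] at hR hV
  have hsplit : (2 / Δt) • (Δt⁻¹ • (φ Δt - φ 0) - deriv φ 0)
      - (2 : ℝ)⁻¹ • (iteratedDeriv 2 φ Δt + iteratedDeriv 2 φ 0)
      = (2 / Δt ^ 2) • (φ Δt - φ 0 - Δt • deriv φ 0 - (Δt ^ 2 / 2) • iteratedDeriv 2 φ 0)
        - (2 : ℝ)⁻¹ • (iteratedDeriv 2 φ Δt - iteratedDeriv 2 φ 0) := by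
    match_scalars <;> field_simp
    ring
  rw [hsplit]
  calc _ ≤ (2 / Δt ^ 2) * (M * Δt ^ 3 / 6) + 2⁻¹ * (M * Δt) := by
        refine (norm_sub_le _ _).trans (add_le_add ?_ ?_) <;>
          (rw [norm_smul, Real.norm_of_nonneg (by positivity)]; gcongr)
    _ ≤ Δt * M := by
        field_simp
        nlinarith [mul_nonneg hM₀ hΔt.le]

theorem stmt_10 {X : Type*} [NormedAddCommGroup X] [NormedSpace ℝ X]
    (T Δt : ℝ) (hΔt : 0 < Δt) (hΔtT : Δt ≤ T)
    (φ : ℝ → X) (hφ : ContDiff ℝ 3 φ) :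
    ‖(2 / Δt) • (Δt⁻¹ • (φ Δt - φ 0) - deriv φ 0)
        - (2 : ℝ)⁻¹ • (iteratedDeriv 2 φ Δt + iteratedDeriv 2 φ 0)‖
      ≤ Δt * ⨆ s : Set.Icc (0 : ℝ) Δt, ‖iteratedDeriv 3 φ (s : ℝ)‖ :=
  stmt_10_general Δt hΔt φ hφ
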